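/- Let G and H be topological groups and π : G → H a relatively compact homomorphism. Then DG(π) is a normal subgroup of the closed subgroup closure(π(G)) of H; that is, for every g ∈ G and every h ∈ closure(π(G)), conjugation by h maps DG(π) into itself. -/

import Mathlib

/-!
`DG(π)` is closed under products because every neighbourhood `U` of `1` contains some `V * V`,
and under inverses because `U⁻¹` is again a neighbourhood of `1`. Conjugation by `π g` carries
`closure (π '' (g⁻¹ U g))` onto `closure (π '' U)`, so `π(G)` normalizes `DG(π)`; since `DG(π)`
is closed, the elements of `H` conjugating it into itself form a closed set, which therefore
contains `closure (π(G))`.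
-/

open Topology Pointwise

theorem isClosed_setOf_forall_conj_mem {H : Type*} [Group H] [TopologicalSpace H]
    [IsTopologicalGroup H] {S : Set H} (hS : IsClosed S) :
    IsClosed {h : H | ∀ x ∈ S, h * x * h⁻¹ ∈ S} := by
  simp only [Set.ofPred_forall]
  exact isClosed_biInter fun x _ => hS.preimage (by fun_prop)

namespace MonoidHom

variable {G H : Type*} [Group G] [TopologicalSpace G] [IsTopologicalGroup G]
  [Group H] [TopologicalSpace H] [IsTopologicalGroup H]

def discontinuityGroup (π : G →* H) : Subgroup H where
  carrier := ⋂ U ∈ 𝓝 (1 : G), closure (π '' U)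
  one_mem' := Set.mem_iInter₂.2 fun U hU =>
    subset_closure ⟨1, mem_of_mem_nhds hU, map_one π⟩
  mul_mem' {x y} hx hy := Set.mem_iInter₂.2 fun U hU => by
    obtain ⟨V, hV, hVV⟩ := exists_nhds_one_split hU
    refine map_mem_closure₂ continuous_mul (Set.mem_iInter₂.1 hx V hV)
      (Set.mem_iInter₂.1 hy V hV) ?_
    rintro _ ⟨v, hv, rfl⟩ _ ⟨w, hw, rfl⟩
    exact ⟨v * w, hVV v hv w hw, map_mul π v w⟩
  inv_mem' {x} hx := Set.mem_iInter₂.2 fun U hU => by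
    have := Set.mem_iInter₂.1 hx _ (inv_mem_nhds_one G hU)
    rwa [Set.image_inv, ← inv_closure, Set.mem_inv] at this

theorem mem_discontinuityGroup {π : G →* H} {x : H} :
    x ∈ π.discontinuityGroup ↔ ∀ U ∈ 𝓝 (1 : G), x ∈ closure (π '' U) :=
  Set.mem_iInter₂

theorem isClosed_discontinuityGroup (π : G →* H) : IsClosed (π.discontinuityGroup : Set H) :=
  isClosed_biInter fun _ _ => isClosed_closure

theorem map_conj_mem_discontinuityGroup (π : G →* H) (g : G) {x : H}
    (hx : x ∈ π.discontinuityGroup) : π g * x * (π g)⁻¹ ∈ π.discontinuityGroup := by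
  refine mem_discontinuityGroup.2 fun U hU => ?_
  have hV : (fun a => g * a * g⁻¹) ⁻¹' U ∈ 𝓝 (1 : G) :=
    (by fun_prop : Continuous fun a => g * a * g⁻¹).continuousAt.preimage_mem_nhds
      (by simpa using hU)
  refine map_mem_closure (f := fun y => π g * y * (π g)⁻¹) (by fun_prop)
    (mem_discontinuityGroup.1 hx _ hV) ?_
  rintro _ ⟨a, ha, rfl⟩
  exact ⟨g * a * g⁻¹, ha, by simp⟩

theorem conj_mem_discontinuityGroup (π : G →* H) {h : H} (hh : h ∈ closure (Set.range π))
    {x : H} (hx : x ∈ π.discontinuityGroup) : h * x * h⁻¹ ∈ π.discontinuityGroup := by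
  have hrange :
      Set.range π ⊆ {h | ∀ x ∈ π.discontinuityGroup, h * x * h⁻¹ ∈ π.discontinuityGroup} := by
    rintro _ ⟨g, rfl⟩ x hx
    exact π.map_conj_mem_discontinuityGroup g hx
  exact closure_minimal hrange (isClosed_setOf_forall_conj_mem π.isClosed_discontinuityGroup) hh x hx

end MonoidHom

theorem stmt2_general {G H : Type*} [Group G] [TopologicalSpace G] [IsTopologicalGroup G]
    [Group H] [TopologicalSpace H] [IsTopologicalGroup H]
    (π : G →* H) :
    (∃ S : Subgroup H, (S : Set H) = ⋂ U ∈ nhds (1 : G), closure (π '' U)) ∧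
    ∀ h ∈ closure (Set.range π), ∀ x ∈ ⋂ U ∈ nhds (1 : G), closure (π '' U),
      h * x * h⁻¹ ∈ ⋂ U ∈ nhds (1 : G), closure (π '' U) :=
  ⟨⟨π.discontinuityGroup, rfl⟩, fun _ hh _ hx => π.conj_mem_discontinuityGroup hh hx⟩

/-- The discontinuity group `DG(π)` is a normal subgroup of the closed subgroup
`closure (π(G))` of `H`: conjugation by any element of `closure (π(G))` maps
`DG(π)` into itself. -/
theorem stmt2 {G H : Type*} [Group G] [TopologicalSpace G] [IsTopologicalGroup G]
    [Group H] [TopologicalSpace H] [IsTopologicalGroup H] [T2Space H]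
    (π : G →* H)
    (hrc : ∃ U ∈ nhds (1 : G), IsCompact (closure (π '' U))) :
    (∃ S : Subgroup H, (S : Set H) = ⋂ U ∈ nhds (1 : G), closure (π '' U)) ∧
    ∀ h ∈ closure (Set.range π), ∀ x ∈ ⋂ U ∈ nhds (1 : G), closure (π '' U),
      h * x * h⁻¹ ∈ ⋂ U ∈ nhds (1 : G), closure (π '' U) :=
  stmt2_general π
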